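/- arXiv:quant-ph/0308004 — 4 statements merged into one kernel-verified Lean document; each statement's English description precedes it below -/
import Mathlib

section
/- If ρ is a 2×2 density matrix with ρ ≠ (1/2)I₂, then the unitary orbit {U ρ U† : U ∈ U(2)}, with the subspace topology, is homeomorphic to the 2-sphere S² (the unit sphere in 3-dimensional Euclidean space). -/
open Matrix Complex

noncomputable def blochB (σ : Matrix (Fin 2) (Fin 2) ℂ) : EuclideanSpace ℝ (Fin 3) :=
  (EuclideanSpace.equiv (Fin 3) ℝ).symm ![2 * (σ 0 1).re, 2 * (σ 0 1).im, (σ 0 0).re - (σ 1 1).re]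

lemma blochB_apply (σ : Matrix (Fin 2) (Fin 2) ℂ) (i : Fin 3) :
    blochB σ i = ![2 * (σ 0 1).re, 2 * (σ 0 1).im, (σ 0 0).re - (σ 1 1).re] i := rfl

lemma herm_im00 {σ : Matrix (Fin 2) (Fin 2) ℂ} (h : σ.IsHermitian) : (σ 0 0).im = 0 :=
  Complex.conj_eq_iff_im.mp (h.apply 0 0)

lemma herm_im11 {σ : Matrix (Fin 2) (Fin 2) ℂ} (h : σ.IsHermitian) : (σ 1 1).im = 0 :=
  Complex.conj_eq_iff_im.mp (h.apply 1 1)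

lemma herm_10 {σ : Matrix (Fin 2) (Fin 2) ℂ} (h : σ.IsHermitian) :
    σ 1 0 = (starRingEnd ℂ) (σ 0 1) := (h.apply 1 0).symm

lemma trace_facts {σ : Matrix (Fin 2) (Fin 2) ℂ} (ht : σ.trace = 1) :
    (σ 0 0).re + (σ 1 1).re = 1 ∧ (σ 0 0).im + (σ 1 1).im = 0 := by
  rw [Matrix.trace_fin_two] at ht
  constructor
  · simpa using congrArg Complex.re ht
  · simpa using congrArg Complex.im ht

lemma blochB_norm_sq {σ : Matrix (Fin 2) (Fin 2) ℂ} (h : σ.IsHermitian) (ht : σ.trace = 1) :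
    ‖blochB σ‖ ^ 2 = 1 - 4 * (σ.det).re := by
  obtain ⟨ht1, _⟩ := trace_facts ht
  have h00 := herm_im00 h
  have h11 := herm_im11 h
  have h10 := herm_10 h
  have hdet : (σ.det).re = (σ 0 0).re * (σ 1 1).re - ((σ 0 1).re ^ 2 + (σ 0 1).im ^ 2) := by
    rw [Matrix.det_fin_two, h10]
    simp [Complex.sub_re, Complex.mul_re, h00, h11]
    ring
  have hnorm : ‖blochB σ‖ ^ 2 = ∑ i : Fin 3, (blochB σ i) ^ 2 := by
    rw [EuclideanSpace.norm_eq, Real.sq_sqrt (by positivity)]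
    simp [sq_abs]
  rw [hnorm, Fin.sum_univ_three, blochB_apply, blochB_apply, blochB_apply, hdet]
  simp only [Matrix.cons_val_zero, Matrix.cons_val_one, Matrix.head_cons, Matrix.cons_val_two,
    Matrix.tail_cons]
  nlinarith [ht1]

lemma blochB_injOn {σ τ : Matrix (Fin 2) (Fin 2) ℂ} (hσ : σ.IsHermitian) (hτ : τ.IsHermitian)
    (htσ : σ.trace = 1) (htτ : τ.trace = 1) (hB : blochB σ = blochB τ) : σ = τ := by
  have e0 : 2 * (σ 0 1).re = 2 * (τ 0 1).re := congrArg (· 0) hB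
  have e1 : 2 * (σ 0 1).im = 2 * (τ 0 1).im := congrArg (· 1) hB
  have e2 : (σ 0 0).re - (σ 1 1).re = (τ 0 0).re - (τ 1 1).re := congrArg (· 2) hB
  obtain ⟨hs1, _⟩ := trace_facts htσ
  obtain ⟨ht1, _⟩ := trace_facts htτ
  have h01 : σ 0 1 = τ 0 1 := Complex.ext (by linarith) (by linarith)
  have h00 : σ 0 0 = τ 0 0 :=
    Complex.ext (by linarith) (by rw [herm_im00 hσ, herm_im00 hτ])
  have h11 : σ 1 1 = τ 1 1 :=
    Complex.ext (by linarith) (by rw [herm_im11 hσ, herm_im11 hτ])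
  ext i j
  fin_cases i <;> fin_cases j
  · exact h00
  · exact h01
  · show σ 1 0 = τ 1 0
    rw [herm_10 hσ, herm_10 hτ, h01]
  · exact h11

lemma conj_isHermitian {σ U : Matrix (Fin 2) (Fin 2) ℂ} (h : σ.IsHermitian) :
    (U * σ * star U).IsHermitian := by
  simpa [Matrix.star_eq_conjTranspose, mul_assoc] using
    Matrix.isHermitian_mul_mul_conjTranspose U h

lemma conj_trace {σ U : Matrix (Fin 2) (Fin 2) ℂ} (hU : U ∈ Matrix.unitaryGroup (Fin 2) ℂ) :
    (U * σ * star U).trace = σ.trace := by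
  rw [Matrix.trace_mul_cycle, (Matrix.mem_unitaryGroup_iff').mp hU, one_mul]

lemma conj_det {σ U : Matrix (Fin 2) (Fin 2) ℂ} (hU : U ∈ Matrix.unitaryGroup (Fin 2) ℂ) :
    (U * σ * star U).det = σ.det := by
  have h1 : U.det * (star U).det = 1 := by
    rw [← Matrix.det_mul, (Matrix.mem_unitaryGroup_iff).mp hU, Matrix.det_one]
  rw [Matrix.det_mul, Matrix.det_mul]
  calc U.det * σ.det * (star U).det = (U.det * (star U).det) * σ.det := by ring
  _ = σ.det := by rw [h1, one_mul]

noncomputable def swapM : Matrix (Fin 2) (Fin 2) ℂ := !![0, 1; 1, 0]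

lemma swapM_star : star swapM = swapM := by
  ext i j
  fin_cases i <;> fin_cases j <;> simp [swapM, Matrix.star_eq_conjTranspose]

lemma swapM_mem : swapM ∈ Matrix.unitaryGroup (Fin 2) ℂ := by
  rw [Matrix.mem_unitaryGroup_iff, swapM_star]
  ext i j
  fin_cases i <;> fin_cases j <;>
    simp [swapM, Matrix.mul_apply, Fin.sum_univ_two]

lemma swapM_diag (d : Fin 2 → ℂ) :
    swapM * Matrix.diagonal d * star swapM = Matrix.diagonal ![d 1, d 0] := by
  rw [swapM_star]
  ext i j
  fin_cases i <;> fin_cases j <;>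
    simp [swapM, Matrix.mul_apply, Fin.sum_univ_two, Matrix.diagonal_apply, Matrix.vecHead,
      Matrix.vecTail, Matrix.vecMul, dotProduct]

lemma herm_conjugate {A B : Matrix (Fin 2) (Fin 2) ℂ} (hA : A.IsHermitian) (hB : B.IsHermitian)
    (htr : A.trace = B.trace) (hdet : A.det = B.det) :
    ∃ U ∈ Matrix.unitaryGroup (Fin 2) ℂ, B = U * A * star U := by
  set e := hA.eigenvalues with he
  set f := hB.eigenvalues with hf
  have htrA : A.trace = (e 0 : ℂ) + (e 1 : ℂ) := by
    conv_lhs => rw [hA.spectral_theorem]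
    rw [Unitary.conjStarAlgAut_apply, Matrix.trace_mul_cycle, (Matrix.mem_unitaryGroup_iff').mp (hA.eigenvectorUnitary).2,
      one_mul, Matrix.trace_diagonal, Fin.sum_univ_two]
    rfl
  have htrB : B.trace = (f 0 : ℂ) + (f 1 : ℂ) := by
    conv_lhs => rw [hB.spectral_theorem]
    rw [Unitary.conjStarAlgAut_apply, Matrix.trace_mul_cycle, (Matrix.mem_unitaryGroup_iff').mp (hB.eigenvectorUnitary).2,
      one_mul, Matrix.trace_diagonal, Fin.sum_univ_two]
    rfl
  have hsum : e 0 + e 1 = f 0 + f 1 := by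
    have : ((e 0 + e 1 : ℝ) : ℂ) = ((f 0 + f 1 : ℝ) : ℂ) := by
      push_cast
      rw [← htrA, ← htrB, htr]
    exact_mod_cast this
  have hprod : e 0 * e 1 = f 0 * f 1 := by
    have hdA : A.det = (e 0 : ℂ) * (e 1 : ℂ) := by
      rw [hA.det_eq_prod_eigenvalues, Fin.prod_univ_two]; rfl
    have hdB : B.det = (f 0 : ℂ) * (f 1 : ℂ) := by
      rw [hB.det_eq_prod_eigenvalues, Fin.prod_univ_two]; rfl
    have : ((e 0 * e 1 : ℝ) : ℂ) = ((f 0 * f 1 : ℝ) : ℂ) := by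
      push_cast
      rw [← hdA, ← hdB, hdet]
    exact_mod_cast this
  -- f 0 is a root of (x - e 0)(x - e 1)
  have hroot : (f 0 - e 0) * (f 0 - e 1) = 0 := by linear_combination (-(f 0)) * hsum + hprod
  have hcases : (f 0 = e 0 ∧ f 1 = e 1) ∨ (f 0 = e 1 ∧ f 1 = e 0) := by
    rcases mul_eq_zero.mp hroot with h | h
    · left; constructor
      · linarith [sub_eq_zero.mp h]
      · have := sub_eq_zero.mp h; linarith
    · right; constructor
      · linarith [sub_eq_zero.mp h]
      · have := sub_eq_zero.mp h; linarith
  set V : Matrix (Fin 2) (Fin 2) ℂ := ↑(hA.eigenvectorUnitary) with hVdef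
  set W : Matrix (Fin 2) (Fin 2) ℂ := ↑(hB.eigenvectorUnitary) with hWdef
  have hV : V ∈ Matrix.unitaryGroup (Fin 2) ℂ := (hA.eigenvectorUnitary).2
  have hW : W ∈ Matrix.unitaryGroup (Fin 2) ℂ := (hB.eigenvectorUnitary).2
  have hdiagA : star V * A * V = Matrix.diagonal (fun i => (e i : ℂ)) :=
    by have := hA.conjStarAlgAut_star_eigenvectorUnitary; rw [Unitary.conjStarAlgAut_star_apply] at this; exact this
  rcases hcases with ⟨h0, h1⟩ | ⟨h0, h1⟩
  · refine ⟨W * star V, mul_mem hW (Unitary.star_mem hV), ?_⟩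
    have hfe : Matrix.diagonal (fun i => (f i : ℂ)) = Matrix.diagonal (fun i => (e i : ℂ)) := by
      ext i j
      fin_cases i <;> fin_cases j <;> simp [Matrix.diagonal_apply, h0, h1]
    calc B = W * Matrix.diagonal (fun i => (f i : ℂ)) * star W := hB.spectral_theorem
    _ = W * (star V * A * V) * star W := by rw [hfe, hdiagA]
    _ = W * star V * A * star (W * star V) := by
        simp only [StarMul.star_mul, star_star, mul_assoc]
  · refine ⟨W * swapM * star V, mul_mem (mul_mem hW swapM_mem) (Unitary.star_mem hV), ?_⟩
    have hfe : Matrix.diagonal (fun i => (f i : ℂ)) =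
        swapM * Matrix.diagonal (fun i => (e i : ℂ)) * star swapM := by
      rw [swapM_diag]
      ext i j
      fin_cases i <;> fin_cases j <;>
        simp [Matrix.diagonal_apply, Matrix.vecHead, Matrix.vecTail, h0, h1]
    calc B = W * Matrix.diagonal (fun i => (f i : ℂ)) * star W := hB.spectral_theorem
    _ = W * (swapM * (star V * A * V) * star swapM) * star W := by rw [hfe, hdiagA]
    _ = W * swapM * star V * A * star (W * swapM * star V) := by
        simp only [StarMul.star_mul, star_star, mul_assoc]

lemma herm_det_real {σ : Matrix (Fin 2) (Fin 2) ℂ} (h : σ.IsHermitian) :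
    ((σ.det.re : ℝ) : ℂ) = σ.det := by
  refine Complex.conj_eq_iff_re.mp ?_
  calc (starRingEnd ℂ) σ.det = star σ.det := rfl
  _ = σᴴ.det := (Matrix.det_conjTranspose σ).symm
  _ = σ.det := by rw [h.eq]

lemma blochB_continuous : Continuous blochB := by
  refine Continuous.comp (EuclideanSpace.equiv (Fin 3) ℝ).symm.continuous ?_
  refine continuous_pi fun i => ?_
  have h01 : Continuous fun σ : Matrix (Fin 2) (Fin 2) ℂ => σ 0 1 :=
    (continuous_apply 1).comp (continuous_apply 0)
  have h00 : Continuous fun σ : Matrix (Fin 2) (Fin 2) ℂ => σ 0 0 :=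
    (continuous_apply 0).comp (continuous_apply 0)
  have h11 : Continuous fun σ : Matrix (Fin 2) (Fin 2) ℂ => σ 1 1 :=
    (continuous_apply 1).comp (continuous_apply 1)
  fin_cases i
  · exact (continuous_const.mul (Complex.continuous_re.comp h01) : _)
  · exact (continuous_const.mul (Complex.continuous_im.comp h01) : _)
  · exact ((Complex.continuous_re.comp h00).sub (Complex.continuous_re.comp h11) : _)

lemma unitaryGroup_isCompact :
    IsCompact ((Matrix.unitaryGroup (Fin 2) ℂ : Submonoid _) : Set (Matrix (Fin 2) (Fin 2) ℂ)) := by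
  have hK : IsCompact {M : Matrix (Fin 2) (Fin 2) ℂ | ∀ i j, M i j ∈ Metric.closedBall (0 : ℂ) 1} := by
    have hset : {M : Matrix (Fin 2) (Fin 2) ℂ | ∀ i j, M i j ∈ Metric.closedBall (0 : ℂ) 1} =
        Set.univ.pi fun _ : Fin 2 => Set.univ.pi fun _ : Fin 2 => Metric.closedBall (0 : ℂ) 1 := by
      ext M
      constructor
      · intro h i _ j _
        exact h i j
      · intro h i j
        exact h i (Set.mem_univ i) j (Set.mem_univ j)
    rw [hset]
    exact isCompact_univ_pi fun _ => isCompact_univ_pi fun _ => isCompact_closedBall _ _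
  refine hK.of_isClosed_subset ?_ ?_
  · have hcl : IsClosed {M : Matrix (Fin 2) (Fin 2) ℂ | M * star M = 1} :=
      isClosed_eq (continuous_id.matrix_mul continuous_id.matrix_conjTranspose) continuous_const
    have : ((Matrix.unitaryGroup (Fin 2) ℂ : Submonoid _) : Set (Matrix (Fin 2) (Fin 2) ℂ)) =
        {M | M * star M = 1} := by
      ext M
      exact Matrix.mem_unitaryGroup_iff
    rw [this]
    exact hcl
  · intro U hU i j
    have h1 : (U * star U) i i = 1 := by
      rw [Matrix.mem_unitaryGroup_iff.mp hU]
      simp [Matrix.one_apply]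
    rw [Matrix.mul_apply, Fin.sum_univ_two] at h1
    simp only [Matrix.star_apply] at h1
    have h2 : (Complex.normSq (U i 0) : ℂ) + (Complex.normSq (U i 1) : ℂ) = 1 := by
      rw [← Complex.mul_conj, ← Complex.mul_conj]
      exact h1
    have h3 : Complex.normSq (U i 0) + Complex.normSq (U i 1) = 1 := by exact_mod_cast h2
    have h4 : ‖U i j‖ ^ 2 ≤ 1 := by
      rw [← Complex.normSq_eq_norm_sq]
      fin_cases j
      · show Complex.normSq (U i 0) ≤ 1
        nlinarith [Complex.normSq_nonneg (U i 1)]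
      · show Complex.normSq (U i 1) ≤ 1
        nlinarith [Complex.normSq_nonneg (U i 0)]
    rw [Metric.mem_closedBall, dist_zero_right]
    nlinarith [norm_nonneg (U i j)]

lemma orbit_isCompact (ρ : Matrix (Fin 2) (Fin 2) ℂ) :
    IsCompact {σ : Matrix (Fin 2) (Fin 2) ℂ |
      ∃ U ∈ Matrix.unitaryGroup (Fin 2) ℂ, σ = U * ρ * star U} := by
  have himg : {σ : Matrix (Fin 2) (Fin 2) ℂ |
      ∃ U ∈ Matrix.unitaryGroup (Fin 2) ℂ, σ = U * ρ * star U} =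
      (fun U : Matrix (Fin 2) (Fin 2) ℂ => U * ρ * star U) ''
        ((Matrix.unitaryGroup (Fin 2) ℂ : Submonoid _) : Set _) := by
    ext σ
    constructor
    · rintro ⟨U, hU, h⟩; exact ⟨U, hU, h.symm⟩
    · rintro ⟨U, hU, h⟩; exact ⟨U, hU, h.symm⟩
  rw [himg]
  exact unitaryGroup_isCompact.image
    ((continuous_id.matrix_mul continuous_const).matrix_mul continuous_id.matrix_conjTranspose)

noncomputable def blochM (v : EuclideanSpace ℝ (Fin 3)) : Matrix (Fin 2) (Fin 2) ℂ :=
  !![(((1 + v 2) / 2 : ℝ) : ℂ), ((v 0 / 2 : ℝ) : ℂ) + ((v 1 / 2 : ℝ) : ℂ) * Complex.I;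
     ((v 0 / 2 : ℝ) : ℂ) - ((v 1 / 2 : ℝ) : ℂ) * Complex.I, (((1 - v 2) / 2 : ℝ) : ℂ)]

lemma blochM_isHermitian (v : EuclideanSpace ℝ (Fin 3)) : (blochM v).IsHermitian := by
  ext i j
  fin_cases i <;> fin_cases j <;>
    simp [blochM, Matrix.conjTranspose_apply, Complex.ext_iff]

lemma blochM_trace (v : EuclideanSpace ℝ (Fin 3)) : (blochM v).trace = 1 := by
  rw [Matrix.trace_fin_two]
  show (((1 + v 2) / 2 : ℝ) : ℂ) + (((1 - v 2) / 2 : ℝ) : ℂ) = 1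
  push_cast
  ring

lemma blochB_blochM (v : EuclideanSpace ℝ (Fin 3)) : blochB (blochM v) = v := by
  ext i
  fin_cases i <;>
    · show _ = _
      simp [blochB_apply, blochM, Complex.add_re, Complex.add_im, Complex.mul_re, Complex.mul_im]
      ring

lemma blochM_det (v : EuclideanSpace ℝ (Fin 3)) :
    (blochM v).det = (((1 - (v 0 ^ 2 + v 1 ^ 2 + v 2 ^ 2)) / 4 : ℝ) : ℂ) := by
  rw [Matrix.det_fin_two]
  simp only [blochM, Matrix.cons_val', Matrix.cons_val_zero, Matrix.empty_val',
    Matrix.cons_val_fin_one, Matrix.cons_val_one, Matrix.head_cons, Matrix.head_fin_const]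
  simp [Complex.ext_iff, Complex.mul_re, Complex.mul_im, Complex.add_re, Complex.add_im,
    Complex.sub_re, Complex.sub_im, pow_two]
  constructor <;> ring

lemma euclidean_norm_sq (v : EuclideanSpace ℝ (Fin 3)) :
    ‖v‖ ^ 2 = v 0 ^ 2 + v 1 ^ 2 + v 2 ^ 2 := by
  rw [EuclideanSpace.norm_eq, Real.sq_sqrt (by positivity)]
  rw [Fin.sum_univ_three]
  simp [sq_abs]

open scoped ComplexOrder

/-- If ρ is a 2×2 density matrix with ρ ≠ (1/2)I₂, then the unitary
orbit {U ρ U† : U ∈ U(2)} is homeomorphic to the 2-sphere S² (the unit sphere in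
3-dimensional Euclidean space). -/
theorem orbit_homeomorph_sphere_of_two_level
    (ρ : Matrix (Fin 2) (Fin 2) ℂ) (hpsd : ρ.PosSemidef) (htr : ρ.trace = 1)
    (hρ : ρ ≠ (1 / 2 : ℂ) • (1 : Matrix (Fin 2) (Fin 2) ℂ)) :
    Nonempty (({σ : Matrix (Fin 2) (Fin 2) ℂ |
        ∃ U ∈ Matrix.unitaryGroup (Fin 2) ℂ, σ = U * ρ * star U} : Set _) ≃ₜ
      Metric.sphere (0 : EuclideanSpace ℝ (Fin 3)) 1) := by
  have hherm : ρ.IsHermitian := hpsd.1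
  set r := ‖blochB ρ‖ with hr
  have hB0 : blochB ρ ≠ 0 := by
    intro h0
    apply hρ
    have e0 : 2 * (ρ 0 1).re = 0 := congrArg (· 0) h0
    have e1 : 2 * (ρ 0 1).im = 0 := congrArg (· 1) h0
    have e2 : (ρ 0 0).re - (ρ 1 1).re = 0 := congrArg (· 2) h0
    obtain ⟨hs1, _⟩ := trace_facts htr
    have h01 : ρ 0 1 = 0 := Complex.ext (by simp only [Complex.zero_re]; linarith) (by simp only [Complex.zero_im]; linarith)
    have h00 : ρ 0 0 = (1 / 2 : ℂ) :=
      Complex.ext (by simp; linarith) (by simp [herm_im00 hherm])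
    have h11 : ρ 1 1 = (1 / 2 : ℂ) :=
      Complex.ext (by simp; linarith) (by simp [herm_im11 hherm])
    ext i j
    fin_cases i <;> fin_cases j
    · simpa [Matrix.one_apply] using h00
    · simpa [Matrix.one_apply] using h01
    · show ρ 1 0 = _
      rw [herm_10 hherm, h01]
      simp [Matrix.one_apply]
    · simpa [Matrix.one_apply] using h11
  have hrpos : 0 < r := lt_of_le_of_ne (norm_nonneg _) (Ne.symm (norm_ne_zero_iff.mpr hB0))
  set O := {σ : Matrix (Fin 2) (Fin 2) ℂ |
      ∃ U ∈ Matrix.unitaryGroup (Fin 2) ℂ, σ = U * ρ * star U} with hO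
  have hOherm : ∀ σ ∈ O, σ.IsHermitian := by
    rintro σ ⟨U, hU, rfl⟩
    exact conj_isHermitian hherm
  have hOtr : ∀ σ ∈ O, σ.trace = 1 := by
    rintro σ ⟨U, hU, rfl⟩
    rw [conj_trace hU, htr]
  have hOdet : ∀ σ ∈ O, σ.det = ρ.det := by
    rintro σ ⟨U, hU, rfl⟩
    exact conj_det hU
  have hOnorm : ∀ σ ∈ O, ‖blochB σ‖ = r := by
    intro σ hσ
    have h1 : ‖blochB σ‖ ^ 2 = r ^ 2 := by
      rw [blochB_norm_sq (hOherm σ hσ) (hOtr σ hσ), hOdet σ hσ, hr,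
        blochB_norm_sq hherm htr]
    have h2 : (‖blochB σ‖ - r) * (‖blochB σ‖ + r) = 0 := by nlinarith [h1]
    rcases mul_eq_zero.mp h2 with h | h
    · linarith [sub_eq_zero.mp h]
    · linarith [norm_nonneg (blochB σ), hrpos]
  -- the map to the sphere
  let φ : O → Metric.sphere (0 : EuclideanSpace ℝ (Fin 3)) 1 := fun σ =>
    ⟨r⁻¹ • blochB σ.1, by
      rw [mem_sphere_zero_iff_norm, norm_smul, hOnorm σ.1 σ.2]
      rw [Real.norm_eq_abs, abs_inv, abs_of_pos hrpos, inv_mul_cancel₀ hrpos.ne']⟩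
  have hinj : Function.Injective φ := by
    intro σ τ h
    have h1 : r⁻¹ • blochB σ.1 = r⁻¹ • blochB τ.1 := congrArg Subtype.val h
    have h2 : blochB σ.1 = blochB τ.1 :=
      smul_right_injective _ (inv_ne_zero hrpos.ne') h1
    exact Subtype.ext (blochB_injOn (hOherm σ.1 σ.2) (hOherm τ.1 τ.2)
      (hOtr σ.1 σ.2) (hOtr τ.1 τ.2) h2)
  have hsurj : Function.Surjective φ := by
    rintro ⟨u, hu⟩
    rw [mem_sphere_zero_iff_norm] at hu
    set v : EuclideanSpace ℝ (Fin 3) := r • u with hv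
    have hdetv : (blochM v).det = ρ.det := by
      rw [blochM_det]
      have hvc : v 0 ^ 2 + v 1 ^ 2 + v 2 ^ 2 = r ^ 2 := by
        have h1 : ‖v‖ ^ 2 = v 0 ^ 2 + v 1 ^ 2 + v 2 ^ 2 := euclidean_norm_sq v
        have h2 : ‖v‖ = r := by
          rw [hv, norm_smul, Real.norm_eq_abs, abs_of_pos hrpos, hu, mul_one]
        rw [h2] at h1
        linarith
      have h3 : r ^ 2 = 1 - 4 * ρ.det.re := by rw [hr, blochB_norm_sq hherm htr]
      rw [hvc, h3, ← herm_det_real hherm]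
      norm_num
    obtain ⟨U, hU, hUe⟩ := herm_conjugate hherm (blochM_isHermitian v)
      (by rw [htr, blochM_trace]) (by rw [hdetv])
    have hmem : blochM v ∈ O := ⟨U, hU, hUe⟩
    refine ⟨⟨blochM v, hmem⟩, ?_⟩
    apply Subtype.ext
    show r⁻¹ • blochB (blochM v) = u
    rw [blochB_blochM, hv, smul_smul, inv_mul_cancel₀ hrpos.ne', one_smul]
  haveI : CompactSpace O := isCompact_iff_compactSpace.mp (orbit_isCompact ρ)
  have hcont : Continuous φ := by
    refine Continuous.subtype_mk ?_ _
    exact (blochB_continuous.comp continuous_subtype_val).const_smul r⁻¹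
  let e : O ≃ Metric.sphere (0 : EuclideanSpace ℝ (Fin 3)) 1 :=
    Equiv.ofBijective φ ⟨hinj, hsurj⟩
  exact ⟨Continuous.homeoOfEquivCompactToT2 (f := e) hcont⟩
end

section
/- Every 2×2 Hermitian complex matrix ρ with Tr(ρ) = 1 and Tr(ρ²) ≤ 1 is positive semidefinite, and hence is a density matrix. (Consequently, for n = 2 the coherence-vector embedding of density matrices into the closed ball is surjective.) -/
open scoped ComplexOrder

/-- Every 2×2 Hermitian complex matrix ρ with Tr(ρ) = 1 and
Tr(ρ²) ≤ 1 is positive semidefinite, and hence is a density matrix.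
(Consequently, for n = 2 the coherence-vector embedding of density matrices
into the closed ball is surjective.) -/
theorem posSemidef_of_two_level_trace_sq_le_one
    (ρ : Matrix (Fin 2) (Fin 2) ℂ) (hherm : ρ.IsHermitian)
    (htr : ρ.trace = 1) (htr2 : (ρ * ρ).trace ≤ 1) :
    ρ.PosSemidef := by
  set U : Matrix (Fin 2) (Fin 2) ℂ := (hherm.eigenvectorUnitary : Matrix (Fin 2) (Fin 2) ℂ)
  set D : Matrix (Fin 2) (Fin 2) ℂ := Matrix.diagonal (Complex.ofReal ∘ hherm.eigenvalues)
  have hU : U * star U = 1 := (Matrix.mem_unitaryGroup_iff).mp hherm.eigenvectorUnitary.2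
  have hspec : ρ = U * D * star U := hherm.spectral_theorem
  have htrρ : ρ.trace = D.trace := by
    rw [hspec, Matrix.trace_mul_cycle,
      (Matrix.mem_unitaryGroup_iff').mp hherm.eigenvectorUnitary.2, one_mul]
  have htrρ2 : (ρ * ρ).trace = (D * D).trace := by
    have : ρ * ρ = U * (D * D) * star U := by
      rw [hspec]
      have hsU : star U * U = 1 := (Matrix.mem_unitaryGroup_iff').mp hherm.eigenvectorUnitary.2
      calc U * D * star U * (U * D * star U)
          = U * D * (star U * U) * (D * star U) := by simp only [mul_assoc]
        _ = U * (D * D) * star U := by rw [hsU, mul_one]; simp only [mul_assoc]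
    rw [this, Matrix.trace_mul_cycle,
      (Matrix.mem_unitaryGroup_iff').mp hherm.eigenvectorUnitary.2, one_mul]
  -- reduce to eigenvalues
  set a := hherm.eigenvalues 0
  set b := hherm.eigenvalues 1
  have hDtr : D.trace = Complex.ofReal (a + b) := by
    simp [D, Matrix.trace, Matrix.diag, Fin.sum_univ_two, a, b]
  have hD2tr : (D * D).trace = Complex.ofReal (a ^ 2 + b ^ 2) := by
    simp [D, Matrix.diagonal_mul_diagonal, Matrix.trace, Matrix.diag, Fin.sum_univ_two, a, b,
      sq]
  have hab : a + b = 1 := by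
    have := htr.symm.trans (htrρ.trans hDtr)
    exact_mod_cast this.symm
  have hab2 : a ^ 2 + b ^ 2 ≤ 1 := by
    rw [htrρ2, hD2tr] at htr2
    exact_mod_cast htr2
  have hprod : 0 ≤ a * b := by nlinarith
  have ha : 0 ≤ a := by nlinarith
  have hb : 0 ≤ b := by nlinarith
  refine (Matrix.IsHermitian.posSemidef_iff_eigenvalues_nonneg hherm).mpr ?_
  intro i
  fin_cases i
  · exact ha
  · exact hb
end

section
/- Let ρ₁ and ρ₂ be 2n×2n pseudo-pure density matrices (each having exactly two distinct eigenvalues, with multiplicities 1 and 2n−1) that are unitarily equivalent, i.e., ρ₂ = U ρ₁ U† for some U ∈ U(2n). Then there exists a matrix S in the compact symplectic group (S unitary with Sᵀ J S = J, where J = [[0, I_n], [−I_n, 0]]) such that ρ₂ = S ρ₁ S†. In other words, the orbit of a pseudo-pure state under the compact symplectic group coincides with its orbit under the full unitary group U(2n). -/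
open scoped ComplexOrder

namespace Stmt16

/-- J = [[0, I_n], [−I_n, 0]] in n×n block form. -/
def J (n : ℕ) : Matrix (Fin n ⊕ Fin n) (Fin n ⊕ Fin n) ℂ :=
  Matrix.fromBlocks 0 1 (-1) 0

/-- A pseudo-pure state: a density matrix with exactly two distinct eigenvalues
`a` and `b`, with multiplicities 1 and (dimension − 1) respectively. -/
def IsPseudoPure {m : Type*} [Fintype m] [DecidableEq m] (ρ : Matrix m m ℂ) : Prop :=
  ρ.PosSemidef ∧ ρ.trace = 1 ∧
  ∃ (a b : ℝ) (i₀ : m) (V : Matrix m m ℂ), a ≠ b ∧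
    V ∈ Matrix.unitaryGroup m ℂ ∧
    ρ = V * Matrix.diagonal (fun i => if i = i₀ then (a : ℂ) else (b : ℂ)) * star V

open Matrix

variable {n : ℕ}

noncomputable def Mc (M : Matrix (Fin n ⊕ Fin n) (Fin n ⊕ Fin n) ℂ) :
    Matrix (Fin n ⊕ Fin n) (Fin n ⊕ Fin n) ℂ :=
  M.map (starRingEnd ℂ)

noncomputable def dp (x y : Fin n ⊕ Fin n → ℂ) : ℂ := star x ⬝ᵥ y

noncomputable def op (x y : Fin n ⊕ Fin n → ℂ) : Matrix (Fin n ⊕ Fin n) (Fin n ⊕ Fin n) ℂ :=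
  Matrix.vecMulVec x (star y)

noncomputable def Phi (x : Fin n ⊕ Fin n → ℂ) : Fin n ⊕ Fin n → ℂ := J n *ᵥ star x

noncomputable def qop (x y : Fin n ⊕ Fin n → ℂ) : Matrix (Fin n ⊕ Fin n) (Fin n ⊕ Fin n) ℂ :=
  op x y + op (Phi x) (Phi y)

lemma Jt : (J n)ᵀ = -(J n) := by
  simp [J, Matrix.fromBlocks_transpose, Matrix.fromBlocks_neg]

lemma Jh : (J n)ᴴ = -(J n) := by
  simp [J, Matrix.fromBlocks_conjTranspose, Matrix.fromBlocks_neg]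

lemma McJ : Mc (J n) = J n := by
  ext i j; rcases i with i | i <;> rcases j with j | j <;>
    simp [Mc, J, Matrix.fromBlocks, Matrix.one_apply]

lemma JJ : J n * J n = -1 := by
  rw [J, Matrix.fromBlocks_multiply]
  have : (-1 : Matrix (Fin n ⊕ Fin n) (Fin n ⊕ Fin n) ℂ) = Matrix.fromBlocks (-1) 0 0 (-1) := by
    rw [← Matrix.fromBlocks_one, Matrix.fromBlocks_neg]; simp
  rw [this]; simp

-- star (J *ᵥ x) = J *ᵥ star x
lemma star_J_mulVec (x : Fin n ⊕ Fin n → ℂ) : star (J n *ᵥ x) = J n *ᵥ star x := by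
  ext i
  simp only [Pi.star_apply, Matrix.mulVec, dotProduct, star_sum, star_mul']
  refine Finset.sum_congr rfl fun j _ => ?_
  have : star (J n i j) = J n i j := congrFun (congrFun McJ i) j
  rw [this, mul_comm]

lemma Phi_Phi (x : Fin n ⊕ Fin n → ℂ) : Phi (Phi x) = -x := by
  unfold Phi
  rw [star_J_mulVec, star_star, mulVec_mulVec, JJ, Matrix.neg_mulVec, Matrix.one_mulVec]

lemma Phi_smul (a : ℂ) (x : Fin n ⊕ Fin n → ℂ) :
    Phi (a • x) = star a • Phi x := by
  unfold Phi; rw [star_smul, mulVec_smul]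

lemma Phi_add (x y : Fin n ⊕ Fin n → ℂ) : Phi (x + y) = Phi x + Phi y := by
  unfold Phi; rw [star_add, mulVec_add]

lemma Phi_sub (x y : Fin n ⊕ Fin n → ℂ) : Phi (x - y) = Phi x - Phi y := by
  unfold Phi; rw [star_sub, mulVec_sub]

lemma Phi_zero : Phi (n := n) 0 = 0 := by
  unfold Phi; simp

lemma vecMul_J (x : Fin n ⊕ Fin n → ℂ) : x ᵥ* J n = -(J n *ᵥ x) := by
  conv_lhs => rw [← Matrix.transpose_transpose (J n)]
  rw [Matrix.vecMul_transpose, Jt, Matrix.neg_mulVec]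

lemma skew (x : Fin n ⊕ Fin n → ℂ) : (J n *ᵥ x) ⬝ᵥ x = 0 := by
  have h : (J n *ᵥ x) ⬝ᵥ x = x ⬝ᵥ (J n *ᵥ x) := dotProduct_comm _ _
  have h2 : x ⬝ᵥ (J n *ᵥ x) = (x ᵥ* J n) ⬝ᵥ x := dotProduct_mulVec _ _ _
  have h4 : x ᵥ* J n = -(J n *ᵥ x) := vecMul_J x
  have h5 := h.trans h2
  rw [h4, neg_dotProduct] at h5
  linear_combination h5 / 2
  

-- dp lemmas
lemma dp_conj (x y : Fin n ⊕ Fin n → ℂ) : star (dp x y) = dp y x := by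
  unfold dp
  rw [star_dotProduct, star_star]

lemma dp_add_left (x y z : Fin n ⊕ Fin n → ℂ) : dp (x + y) z = dp x z + dp y z := by
  unfold dp; rw [star_add, add_dotProduct]

lemma dp_add_right (x y z : Fin n ⊕ Fin n → ℂ) : dp x (y + z) = dp x y + dp x z := by
  unfold dp; rw [dotProduct_add]

lemma dp_sub_left (x y z : Fin n ⊕ Fin n → ℂ) : dp (x - y) z = dp x z - dp y z := by
  unfold dp; rw [star_sub, sub_dotProduct]

lemma dp_sub_right (x y z : Fin n ⊕ Fin n → ℂ) : dp x (y - z) = dp x y - dp x z := by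
  unfold dp; rw [dotProduct_sub]

lemma dp_smul_left (a : ℂ) (x z : Fin n ⊕ Fin n → ℂ) : dp (a • x) z = star a * dp x z := by
  unfold dp; rw [star_smul, smul_dotProduct]; simp [smul_eq_mul]

lemma dp_smul_right (a : ℂ) (x z : Fin n ⊕ Fin n → ℂ) : dp x (a • z) = a * dp x z := by
  unfold dp; rw [dotProduct_smul]; simp [smul_eq_mul]

lemma dp_phi_self (x : Fin n ⊕ Fin n → ℂ) : dp x (Phi x) = 0 := by
  unfold dp Phi
  rw [dotProduct_comm]
  exact skew (star x)

lemma dp_phi_self' (x : Fin n ⊕ Fin n → ℂ) : dp (Phi x) x = 0 := by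
  rw [← dp_conj, dp_phi_self, star_zero]

lemma dp_phi_phi (x y : Fin n ⊕ Fin n → ℂ) : dp (Phi x) (Phi y) = dp y x := by
  unfold dp Phi
  rw [star_J_mulVec, star_star, dotProduct_mulVec]
  have h : (J n *ᵥ x) ᵥ* J n = x := by
    rw [vecMul_J, mulVec_mulVec, JJ, Matrix.neg_mulVec, Matrix.one_mulVec, neg_neg]
  rw [h, dotProduct_comm]

-- op lemmas
lemma op_mulVec (x y z : Fin n ⊕ Fin n → ℂ) : op x y *ᵥ z = dp y z • x := by
  ext i
  simp [op, dp, Matrix.mulVec, Matrix.vecMulVec_apply, dotProduct, Finset.mul_sum,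
    mul_add, mul_comm, mul_assoc, mul_left_comm]

lemma mul_op (M : Matrix (Fin n ⊕ Fin n) (Fin n ⊕ Fin n) ℂ) (x y : Fin n ⊕ Fin n → ℂ) :
    M * op x y = op (M *ᵥ x) y := by
  ext i j
  simp [op, Matrix.mul_apply, Matrix.vecMulVec_apply, Matrix.mulVec, dotProduct,
    Finset.sum_mul, add_mul, mul_assoc]

lemma op_mul (x y : Fin n ⊕ Fin n → ℂ) (M : Matrix (Fin n ⊕ Fin n) (Fin n ⊕ Fin n) ℂ) :
    op x y * M = op x (Mᴴ *ᵥ y) := by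
  ext i j
  simp only [op, Matrix.mul_apply, Matrix.vecMulVec_apply, Pi.star_apply, Matrix.mulVec,
    dotProduct, Matrix.conjTranspose_apply, star_sum, star_mul', star_star,
    Finset.mul_sum]
  exact Finset.sum_congr rfl fun k _ => by ring

lemma op_smul_right (a : ℂ) (x y : Fin n ⊕ Fin n → ℂ) : op x (a • y) = star a • op x y := by
  ext i j; simp [op, Matrix.vecMulVec_apply, mul_comm, mul_assoc, mul_left_comm]

lemma op_smul_left (a : ℂ) (x y : Fin n ⊕ Fin n → ℂ) : op (a • x) y = a • op x y := by
  ext i j; simp [op, Matrix.vecMulVec_apply, mul_comm, mul_assoc, mul_left_comm]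

lemma op_add_left (x y z : Fin n ⊕ Fin n → ℂ) : op (x + y) z = op x z + op y z := by
  ext i j; simp [op, Matrix.vecMulVec_apply, add_mul]

lemma op_add_right (x y z : Fin n ⊕ Fin n → ℂ) : op x (y + z) = op x y + op x z := by
  ext i j; simp [op, Matrix.vecMulVec_apply, mul_add]

lemma op_zero_left (y : Fin n ⊕ Fin n → ℂ) : op 0 y = 0 := by
  ext i j; simp [op, Matrix.vecMulVec_apply]

lemma op_zero_right (y : Fin n ⊕ Fin n → ℂ) : op y 0 = 0 := by
  ext i j; simp [op, Matrix.vecMulVec_apply]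

lemma star_op (x y : Fin n ⊕ Fin n → ℂ) : star (op x y) = op y x := by
  ext i j
  simp [op, Matrix.star_apply, Matrix.vecMulVec_apply, mul_comm]

lemma op_mul_op (x y z w : Fin n ⊕ Fin n → ℂ) :
    op x y * op z w = dp y z • op x w := by
  rw [op_mul, ← Matrix.star_eq_conjTranspose, star_op, op_mulVec, op_smul_right, dp_conj]

lemma Mc_op (x y : Fin n ⊕ Fin n → ℂ) : Mc (op x y) = op (star x) (star y) := by
  ext i j
  simp [Mc, op, Matrix.vecMulVec_apply]

lemma Mc_mul (A B : Matrix (Fin n ⊕ Fin n) (Fin n ⊕ Fin n) ℂ) : Mc (A * B) = Mc A * Mc B := by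
  unfold Mc
  exact Matrix.map_mul

lemma Mc_one : Mc (1 : Matrix (Fin n ⊕ Fin n) (Fin n ⊕ Fin n) ℂ) = 1 := by
  unfold Mc; exact Matrix.map_one _ (map_zero _) (map_one _)

lemma Mc_add (A B : Matrix (Fin n ⊕ Fin n) (Fin n ⊕ Fin n) ℂ) : Mc (A + B) = Mc A + Mc B := by
  unfold Mc; exact Matrix.map_add _ (by simp) _ _

lemma Mc_sub (A B : Matrix (Fin n ⊕ Fin n) (Fin n ⊕ Fin n) ℂ) : Mc (A - B) = Mc A - Mc B := by
  ext i j; simp [Mc]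

lemma Mc_smul (a : ℂ) (A : Matrix (Fin n ⊕ Fin n) (Fin n ⊕ Fin n) ℂ) :
    Mc (a • A) = star a • Mc A := by
  ext i j; simp [Mc]

lemma Mc_transpose (A : Matrix (Fin n ⊕ Fin n) (Fin n ⊕ Fin n) ℂ) : Mc (Aᴴ) = Aᵀ := by
  ext i j; simp [Mc]


lemma op_neg_left (x y : Fin n ⊕ Fin n → ℂ) : op (-x) y = -op x y := by
  ext i j; simp [op, Matrix.vecMulVec_apply]

lemma op_neg_right (x y : Fin n ⊕ Fin n → ℂ) : op x (-y) = -op x y := by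
  ext i j; simp [op, Matrix.vecMulVec_apply]

lemma J_mulVec_phi (x : Fin n ⊕ Fin n → ℂ) : J n *ᵥ Phi x = -star x := by
  unfold Phi
  rw [mulVec_mulVec, JJ, Matrix.neg_mulVec, Matrix.one_mulVec]

lemma star_phi (x : Fin n ⊕ Fin n → ℂ) : star (Phi x) = J n *ᵥ x := by
  unfold Phi; rw [star_J_mulVec, star_star]

lemma star_qop (x y : Fin n ⊕ Fin n → ℂ) : star (qop x y) = qop y x := by
  unfold qop
  rw [star_add, star_op, star_op]

lemma symp_qop (x y : Fin n ⊕ Fin n → ℂ) :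
    J n * qop x y = Mc (qop x y) * J n := by
  unfold qop
  rw [Matrix.mul_add, Mc_add, Matrix.add_mul, mul_op, mul_op, J_mulVec_phi, op_neg_left,
    Mc_op, Mc_op, star_phi, star_phi, op_mul, op_mul, Jh, Matrix.neg_mulVec,
    Matrix.neg_mulVec, op_neg_right, op_neg_right, mulVec_mulVec, JJ, Matrix.neg_mulVec,
    Matrix.one_mulVec, op_neg_right, neg_neg]
  have h1 : J n *ᵥ star y = Phi y := rfl
  rw [h1]
  abel

lemma qop_mulVec (x y z : Fin n ⊕ Fin n → ℂ) :
    qop x y *ᵥ z = dp y z • x + dp (Phi y) z • Phi x := by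
  unfold qop
  rw [Matrix.add_mulVec, op_mulVec, op_mulVec]

lemma qop_mul_qop (x y z w : Fin n ⊕ Fin n → ℂ) :
    qop x y * qop z w = dp y z • op x w + dp y (Phi z) • op x (Phi w)
      + dp (Phi y) z • op (Phi x) w + dp z y • op (Phi x) (Phi w) := by
  unfold qop
  rw [Matrix.add_mul, Matrix.mul_add, Matrix.mul_add, op_mul_op, op_mul_op, op_mul_op,
    op_mul_op, dp_phi_phi]
  abel

/-- Key multiplication rule through a unit vector. -/
lemma qmul {y : Fin n ⊕ Fin n → ℂ} (hy : dp y y = 1) (x w : Fin n ⊕ Fin n → ℂ) :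
    qop x y * qop y w = qop x w := by
  rw [qop_mul_qop, hy, dp_phi_self, dp_phi_self', one_smul, zero_smul, zero_smul, one_smul]
  unfold qop
  abel

lemma qop_sq (w : Fin n ⊕ Fin n → ℂ) : qop w w * qop w w = dp w w • qop w w := by
  rw [qop_mul_qop, dp_phi_self, dp_phi_self', zero_smul, zero_smul]
  unfold qop
  rw [smul_add]
  abel


lemma dp_neg_left (x z : Fin n ⊕ Fin n → ℂ) : dp (-x) z = -dp x z := by
  unfold dp; rw [star_neg, neg_dotProduct]

lemma op_sub_left (x y z : Fin n ⊕ Fin n → ℂ) : op (x - y) z = op x z - op y z := by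
  ext i j; simp [op, Matrix.vecMulVec_apply, sub_mul]

lemma op_sub_right (x y z : Fin n ⊕ Fin n → ℂ) : op x (y - z) = op x y - op x z := by
  ext i j; simp [op, Matrix.vecMulVec_apply, mul_sub]

lemma dp_self_zero {w : Fin n ⊕ Fin n → ℂ} (h : dp w w = 0) : w = 0 :=
  dotProduct_star_self_eq_zero.mp h

set_option maxHeartbeats 2000000 in
lemma exists_uprime (u v : Fin n ⊕ Fin n → ℂ) (hu : dp u u = 1) :
    ∃ (u' : Fin n ⊕ Fin n → ℂ) (r : ℝ), dp u' u' = 1 ∧ dp u' v = (r : ℂ) ∧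
      dp (Phi u') v = 0 ∧ qop u' u' = qop u u := by
  set c := dp u v with hc
  set d := dp (Phi u) v with hd
  set r := Real.sqrt (Complex.normSq c + Complex.normSq d) with hrdef
  have hnn : (0:ℝ) ≤ Complex.normSq c + Complex.normSq d :=
    add_nonneg (Complex.normSq_nonneg _) (Complex.normSq_nonneg _)
  have hR : (r : ℂ) * r = (starRingEnd ℂ) c * c + (starRingEnd ℂ) d * d := by
    have h1 : ((r : ℂ)) * r = ((r * r : ℝ) : ℂ) := by push_cast; ring
    rw [h1, Real.mul_self_sqrt hnn, Complex.ofReal_add, Complex.normSq_eq_conj_mul_self,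
      Complex.normSq_eq_conj_mul_self]
  have hsr : (starRingEnd ℂ) ((r : ℂ)⁻¹) = (r : ℂ)⁻¹ := by
    rw [map_inv₀, Complex.conj_ofReal]
  by_cases hr : r = 0
  · have h0 : Complex.normSq c + Complex.normSq d = 0 := by
      have := (Real.sqrt_eq_zero hnn).mp hr
      linarith
    have hc0 : c = 0 := by
      apply Complex.normSq_eq_zero.mp
      have := Complex.normSq_nonneg c; have := Complex.normSq_nonneg d; linarith
    have hd0 : d = 0 := by
      apply Complex.normSq_eq_zero.mp
      have := Complex.normSq_nonneg c; have := Complex.normSq_nonneg d; linarith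
    refine ⟨u, 0, hu, ?_, ?_, rfl⟩
    · rw [← hc, hc0]; simp
    · rw [← hd, hd0]
  · have hrc : (r : ℂ) ≠ 0 := by exact_mod_cast hr
    set u' : Fin n ⊕ Fin n → ℂ := (r : ℂ)⁻¹ • (c • u + d • Phi u) with hu'
    have hphi : Phi u' = (r : ℂ)⁻¹ • (star c • Phi u - star d • u) := by
      rw [hu', Phi_smul, Phi_add, Phi_smul, Phi_smul, Phi_Phi]
      rw [show star ((r:ℂ)⁻¹) = (r:ℂ)⁻¹ from hsr, smul_neg, sub_eq_add_neg]
    refine ⟨u', r, ?_, ?_, ?_, ?_⟩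
    · rw [hu']
      simp only [dp_smul_left, dp_smul_right, dp_add_left, dp_add_right, dp_phi_self,
        dp_phi_self', dp_phi_phi, hu, Complex.star_def, map_inv₀, _root_.map_mul,
        Complex.conj_ofReal, mul_zero, mul_one, add_zero, zero_add]
      field_simp
      first
        | linear_combination -2*hR
        | linear_combination 2*hR
        | linear_combination hR
        | linear_combination -hR
    · rw [hu']
      simp only [dp_smul_left, dp_add_left, Complex.star_def, map_inv₀, _root_.map_mul,
        Complex.conj_ofReal, Complex.conj_conj, ← hc, ← hd]
      field_simp
      first
        | linear_combination -2*hR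
        | linear_combination 2*hR
        | linear_combination hR
        | linear_combination -hR
    · rw [hphi]
      simp only [dp_smul_left, dp_sub_left, dp_neg_left, Complex.star_def, map_inv₀,
        _root_.map_mul, Complex.conj_ofReal, Complex.conj_conj, ← hc, ← hd]
      ring
    · unfold qop
      rw [hu', hphi]
      simp only [op_smul_left, op_smul_right, op_add_left, op_add_right, op_sub_left,
        op_sub_right, smul_smul, smul_sub, smul_add, Complex.star_def, map_inv₀, _root_.map_mul,
        Complex.conj_ofReal, Complex.conj_conj, map_sub]
      match_scalars
      all_goals field_simp
      all_goals first
        | ring1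
        | linear_combination -2*hR
        | linear_combination 2*hR
        | linear_combination hR
        | linear_combination -hR


set_option maxHeartbeats 1000000 in
lemma exists_symp (u v : Fin n ⊕ Fin n → ℂ) (hu : dp u u = 1) (hv : dp v v = 1) :
    ∃ S : Matrix (Fin n ⊕ Fin n) (Fin n ⊕ Fin n) ℂ,
      star S * S = 1 ∧ S * star S = 1 ∧ J n * S = Mc S * J n ∧ S *ᵥ v = u := by
  obtain ⟨u', r, hu'1, hu'v, hphiu'v, hqop⟩ := exists_uprime u v hu
  set w : Fin n ⊕ Fin n → ℂ := v - u' with hw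
  have hrreal : star ((r : ℂ)) = (r : ℂ) := by rw [Complex.star_def, Complex.conj_ofReal]
  have hvu' : dp v u' = (r : ℂ) := by rw [← dp_conj, hu'v, hrreal]
  have hww : dp w w = 2 - 2 * r := by
    rw [hw, dp_sub_left, dp_sub_right, dp_sub_right, hv, hu'1, hu'v, hvu']; ring
  have hwwstar : star (dp w w) = dp w w := by
    rw [dp_conj]
  set kc : ℂ := 2 / dp w w with hk
  set Hm : Matrix (Fin n ⊕ Fin n) (Fin n ⊕ Fin n) ℂ := 1 - kc • qop w w with hH
  have hkstar : star kc = kc := by rw [hk, star_div₀, hwwstar]; norm_num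
  have hHstar : star Hm = Hm := by
    rw [hH, star_sub, star_one, star_smul, hkstar, star_qop]
  have hcoef : kc * kc * dp w w = kc + kc := by
    by_cases h0 : dp w w = 0
    · rw [hk, h0]; simp
    · rw [hk]; field_simp; ring
  have hHH : Hm * Hm = 1 := by
    rw [hH]
    simp only [Matrix.mul_sub, Matrix.sub_mul, one_mul, mul_one, mul_smul_comm,
      smul_mul_assoc, smul_smul, qop_sq]
    match_scalars
    <;> first
      | ring1
      | linear_combination hcoef
      | linear_combination -hcoef
  have hHv : Hm *ᵥ v = u' := by
    by_cases h0 : dp w w = 0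
    · have hw0 : w = 0 := dp_self_zero h0
      have hvu : v = u' := by
        have := hw.symm.trans hw0
        exact sub_eq_zero.mp this
      have hq0 : qop w w = 0 := by
        rw [hw0]
        unfold qop
        rw [op_zero_left, Phi_zero, op_zero_left, add_zero]
      rw [hH, hq0, smul_zero, sub_zero, Matrix.one_mulVec, hvu]
    · have h1 : dp w v = 1 - r := by rw [hw, dp_sub_left, hv, hu'v]
      have h2 : dp (Phi w) v = 0 := by
        rw [hw, Phi_sub, dp_sub_left, dp_phi_self', hphiu'v, sub_zero]
      have h3 : kc * (1 - r) = 1 := by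
        rw [hk, hww]
        rw [hww] at h0
        rw [div_mul_eq_mul_div, div_eq_one_iff_eq h0]
        ring
      rw [hH, Matrix.sub_mulVec, Matrix.one_mulVec, Matrix.smul_mulVec, qop_mulVec,
        h1, h2, zero_smul, add_zero, smul_smul, h3, one_smul, hw]
      abel
  have hHsymp : J n * Hm = Mc Hm * J n := by
    rw [hH, Mc_sub, Mc_one, Mc_smul, hkstar, Matrix.mul_sub, Matrix.sub_mul, mul_one,
      one_mul, mul_smul_comm, smul_mul_assoc, symp_qop]
  -- the rotation T
  have hPP : qop u' u' * qop u' u' = qop u' u' := qmul hu'1 u' u'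
  have hPA : qop u' u' * qop u u' = qop u u' := by rw [hqop]; exact qmul hu u u'
  have hAP : qop u u' * qop u' u' = qop u u' := qmul hu'1 u u'
  have hPB : qop u' u' * qop u' u = qop u' u := qmul hu'1 u' u
  have hBP : qop u' u * qop u' u' = qop u' u := by rw [hqop]; exact qmul hu u' u
  have hAB : qop u u' * qop u' u = qop u u := qmul hu'1 u u
  have hBA : qop u' u * qop u u' = qop u' u' := qmul hu u' u'
  set T : Matrix (Fin n ⊕ Fin n) (Fin n ⊕ Fin n) ℂ := 1 - qop u' u' + qop u u' with hT
  have hTstar : star T = 1 - qop u' u' + qop u' u := by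
    rw [hT, star_add, star_sub, star_one, star_qop, star_qop]
  have hTT : star T * T = 1 := by
    rw [hTstar, hT]
    simp only [Matrix.mul_add, Matrix.add_mul, Matrix.mul_sub, Matrix.sub_mul, mul_one,
      one_mul, hPP, hPA, hAP, hPB, hBP, hAB, hBA]
    abel
  have hTT' : T * star T = 1 := by
    rw [hTstar, hT]
    simp only [Matrix.mul_add, Matrix.add_mul, Matrix.mul_sub, Matrix.sub_mul, mul_one,
      one_mul, hPP, hPA, hAP, hPB, hBP, hAB, hBA]
    rw [← hqop]
    abel
  have hTu' : T *ᵥ u' = u := by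
    rw [hT, Matrix.add_mulVec, Matrix.sub_mulVec, Matrix.one_mulVec, qop_mulVec,
      qop_mulVec, hu'1, dp_phi_self']
    simp
  have hTsymp : J n * T = Mc T * J n := by
    rw [hT, Mc_add, Mc_sub, Mc_one, Matrix.mul_add, Matrix.mul_sub, mul_one,
      Matrix.add_mul, Matrix.sub_mul, one_mul, symp_qop, symp_qop]
  refine ⟨T * Hm, ?_, ?_, ?_, ?_⟩
  · rw [Matrix.star_mul, mul_assoc, ← mul_assoc (star T) T Hm, hTT, one_mul, hHstar, hHH]
  · rw [Matrix.star_mul, mul_assoc, ← mul_assoc Hm (star Hm) (star T), hHstar, hHH,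
      one_mul, hTT']
  · rw [← mul_assoc, hTsymp, mul_assoc, hHsymp, ← mul_assoc, ← Mc_mul]
  · rw [← Matrix.mulVec_mulVec, hHv, hTu']


lemma dp_single (i₀ : Fin n ⊕ Fin n) : dp (Pi.single i₀ (1:ℂ)) (Pi.single i₀ 1) = 1 := by
  unfold dp
  simp [dotProduct, Pi.single_apply, apply_ite]

lemma unitary_dp {M : Matrix (Fin n ⊕ Fin n) (Fin n ⊕ Fin n) ℂ} (hM : star M * M = 1)
    (x y : Fin n ⊕ Fin n → ℂ) : dp (M *ᵥ x) (M *ᵥ y) = dp x y := by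
  unfold dp
  rw [Matrix.star_mulVec, dotProduct_mulVec, vecMul_vecMul, ← Matrix.star_eq_conjTranspose,
    hM, Matrix.vecMul_one]

lemma rho_decomp (V : Matrix (Fin n ⊕ Fin n) (Fin n ⊕ Fin n) ℂ) (hV : V * star V = 1)
    (a b : ℝ) (i₀ : Fin n ⊕ Fin n) :
    V * Matrix.diagonal (fun i => if i = i₀ then (a : ℂ) else (b : ℂ)) * star V
      = (b : ℂ) • 1 + ((a : ℂ) - b) • op (V *ᵥ Pi.single i₀ 1) (V *ᵥ Pi.single i₀ 1) := by
  have hdiag : Matrix.diagonal (fun i => if i = i₀ then (a : ℂ) else (b : ℂ))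
      = (b : ℂ) • 1 + ((a : ℂ) - b) • op (Pi.single i₀ 1) (Pi.single i₀ 1) := by
    ext i j
    by_cases hij : i = j
    · subst hij
      by_cases hi : i = i₀ <;>
        simp [Matrix.diagonal_apply, op, Matrix.vecMulVec_apply, Pi.single_apply, hi,
          Matrix.one_apply]
    · have h1 : (Pi.single i₀ 1 : Fin n ⊕ Fin n → ℂ) i * star ((Pi.single i₀ 1 : Fin n ⊕ Fin n → ℂ) j) = 0 := by
        rcases eq_or_ne i i₀ with hi | hi
        · have hj : j ≠ i₀ := fun h => hij (hi.trans h.symm)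
          simp [Pi.single_apply, hj]
        · simp [Pi.single_apply, hi]
      simp [Matrix.diagonal_apply, hij, op, Matrix.vecMulVec_apply, Matrix.one_apply, h1]
      rcases mul_eq_zero.mp h1 with h | h
      · exact Or.inr (Or.inl h)
      · exact Or.inr (Or.inr (by simpa using h))
  rw [hdiag, Matrix.mul_add, Matrix.add_mul, mul_smul_comm, smul_mul_assoc, mul_one, hV,
    mul_smul_comm, smul_mul_assoc, mul_op, op_mul, ← Matrix.star_eq_conjTranspose,
    star_star]

theorem symplectic_transitive_on_pseudoPure_orbit'
    (n : ℕ)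
    (ρ₁ ρ₂ : Matrix (Fin n ⊕ Fin n) (Fin n ⊕ Fin n) ℂ)
    (h₁ : ρ₁.PosSemidef ∧ ρ₁.trace = 1 ∧
      ∃ (a b : ℝ) (i₀ : Fin n ⊕ Fin n) (V : Matrix (Fin n ⊕ Fin n) (Fin n ⊕ Fin n) ℂ),
        a ≠ b ∧ V ∈ Matrix.unitaryGroup (Fin n ⊕ Fin n) ℂ ∧
        ρ₁ = V * Matrix.diagonal (fun i => if i = i₀ then (a : ℂ) else (b : ℂ)) * star V)
    (hequiv : ∃ U ∈ Matrix.unitaryGroup (Fin n ⊕ Fin n) ℂ, ρ₂ = U * ρ₁ * star U) :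
    ∃ S ∈ Matrix.unitaryGroup (Fin n ⊕ Fin n) ℂ,
      S.transpose * J n * S = J n ∧ ρ₂ = S * ρ₁ * star S := by
  obtain ⟨-, -, a, b, i₀, V, -, hV, hρ⟩ := h₁
  obtain ⟨U, hU, hρ₂⟩ := hequiv
  have hV1 : V * star V = 1 := Matrix.mem_unitaryGroup_iff.mp hV
  have hV2 : star V * V = 1 := Matrix.mem_unitaryGroup_iff'.mp hV
  have hW : U * V ∈ Matrix.unitaryGroup (Fin n ⊕ Fin n) ℂ := mul_mem hU hV
  have hW1 : (U * V) * star (U * V) = 1 := Matrix.mem_unitaryGroup_iff.mp hW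
  have hW2 : star (U * V) * (U * V) = 1 := Matrix.mem_unitaryGroup_iff'.mp hW
  set e : Fin n ⊕ Fin n → ℂ := Pi.single i₀ 1 with he
  set v : Fin n ⊕ Fin n → ℂ := V *ᵥ e with hv
  set u : Fin n ⊕ Fin n → ℂ := (U * V) *ᵥ e with hu
  have hvv : dp v v = 1 := by rw [hv, unitary_dp hV2, dp_single]
  have huu : dp u u = 1 := by rw [hu, unitary_dp hW2, dp_single]
  have hρ₁eq : ρ₁ = (b : ℂ) • 1 + ((a : ℂ) - b) • op v v := by
    rw [hρ, rho_decomp V hV1 a b i₀]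
  have hρ₂eq : ρ₂ = (b : ℂ) • 1 + ((a : ℂ) - b) • op u u := by
    rw [hρ₂, hρ]
    have h2 : U * (V * Matrix.diagonal (fun i => if i = i₀ then (a:ℂ) else (b:ℂ)) * star V) *
        (star U) = (U * V) * Matrix.diagonal (fun i => if i = i₀ then (a:ℂ) else (b:ℂ)) *
        (star V * star U) := by
      noncomm_ring
    rw [h2, ← Matrix.star_mul, rho_decomp (U * V) hW1 a b i₀]
  obtain ⟨S, hS1, hS2, hSsymp, hSv⟩ := exists_symp u v huu hvv
  refine ⟨S, Matrix.mem_unitaryGroup_iff.mpr hS2, ?_, ?_⟩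
  · rw [mul_assoc, hSsymp, ← mul_assoc]
    have h1 : Sᵀ * Mc S = 1 := by
      rw [← Mc_transpose, ← Mc_mul, ← Matrix.star_eq_conjTranspose, hS1, Mc_one]
    rw [h1, one_mul]
  · rw [hρ₁eq, hρ₂eq, Matrix.mul_add, Matrix.add_mul, mul_smul_comm, smul_mul_assoc,
      mul_one, hS2, mul_smul_comm, smul_mul_assoc, mul_op, op_mul,
      ← Matrix.star_eq_conjTranspose, star_star, hSv]


/-- If ρ₁ and ρ₂ are 2n×2n pseudo-pure density matrices that are
unitarily equivalent, then they are conjugate by an element of the compact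
symplectic group: the symplectic orbit of a pseudo-pure state coincides with
its unitary orbit. -/
theorem symplectic_transitive_on_pseudoPure_orbit
    (n : ℕ) (hn : 1 ≤ n)
    (ρ₁ ρ₂ : Matrix (Fin n ⊕ Fin n) (Fin n ⊕ Fin n) ℂ)
    (h₁ : IsPseudoPure ρ₁) (h₂ : IsPseudoPure ρ₂)
    (hequiv : ∃ U ∈ Matrix.unitaryGroup (Fin n ⊕ Fin n) ℂ, ρ₂ = U * ρ₁ * star U) :
    ∃ S ∈ Matrix.unitaryGroup (Fin n ⊕ Fin n) ℂ,
      S.transpose * J n * S = J n ∧ ρ₂ = S * ρ₁ * star S := by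
  exact symplectic_transitive_on_pseudoPure_orbit' n ρ₁ ρ₂ h₁ hequiv

end Stmt16
end

section
/- Let a, b be real numbers with 0 < a, 0 < b, a ≠ b, and n(a + b) = 1, and let ρ = diag(a I_n, b I_n) be the corresponding 2n×2n density matrix. Then the stabilizer of ρ in the compact symplectic group, {S : S unitary, Sᵀ J S = J, S ρ S† = ρ}, is exactly the set of matrices of the block form [[A, 0], [0, Ā]] with A ∈ U(n), where Ā is the entrywise complex conjugate of A; this stabilizer is isomorphic as a group to U(n). -/
namespace Stmt18

/-- J = [[0, I_n], [−I_n, 0]] in n×n block form. -/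
def J (n : ℕ) : Matrix (Fin n ⊕ Fin n) (Fin n ⊕ Fin n) ℂ :=
  Matrix.fromBlocks 0 1 (-1) 0

/-- ρ = diag(a I_n, b I_n). -/
def rho (n : ℕ) (a b : ℝ) : Matrix (Fin n ⊕ Fin n) (Fin n ⊕ Fin n) ℂ :=
  Matrix.fromBlocks ((a : ℂ) • 1) 0 0 ((b : ℂ) • 1)

/-- The stabilizer of ρ = diag(a I_n, b I_n) in the compact symplectic group. -/
def stabSet (n : ℕ) (a b : ℝ) : Set (Matrix (Fin n ⊕ Fin n) (Fin n ⊕ Fin n) ℂ) :=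
  {S | S ∈ Matrix.unitaryGroup (Fin n ⊕ Fin n) ℂ ∧
    S.transpose * J n * S = J n ∧ S * rho n a b * star S = rho n a b}

open Matrix

variable {n : ℕ}

lemma conj_conjTranspose (A : Matrix (Fin n) (Fin n) ℂ) :
    (A.map (starRingEnd ℂ)).conjTranspose = A.transpose := by
  ext i j; simp [conjTranspose_apply, Matrix.map_apply]

lemma transpose_mul_conj (A : Matrix (Fin n) (Fin n) ℂ)
    (h : A ∈ Matrix.unitaryGroup (Fin n) ℂ) :
    A.transpose * A.map (starRingEnd ℂ) = 1 := by
  have h1 : star A * A = 1 := h.1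
  have := congrArg Matrix.transpose h1
  simpa [Matrix.transpose_mul, Matrix.star_eq_conjTranspose,
    Matrix.conjTranspose, Matrix.transpose_map] using this

lemma conj_mul_transpose (A : Matrix (Fin n) (Fin n) ℂ)
    (h : A ∈ Matrix.unitaryGroup (Fin n) ℂ) :
    A.map (starRingEnd ℂ) * A.transpose = 1 := by
  have h1 : A * star A = 1 := h.2
  have := congrArg Matrix.transpose h1
  simpa [Matrix.transpose_mul, Matrix.star_eq_conjTranspose,
    Matrix.conjTranspose, Matrix.transpose_map] using this

lemma mem_stab (a b : ℝ) (A : Matrix (Fin n) (Fin n) ℂ)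
    (h : A ∈ Matrix.unitaryGroup (Fin n) ℂ) :
    Matrix.fromBlocks A 0 0 (A.map (starRingEnd ℂ)) ∈ stabSet n a b := by
  have hsA : star A * A = 1 := h.1
  have hAs : A * star A = 1 := h.2
  have hc : (A.map (starRingEnd ℂ)).conjTranspose = A.transpose := conj_conjTranspose A
  have hsc : star (A.map (starRingEnd ℂ)) = A.transpose := hc
  refine ⟨?_, ?_, ?_⟩
  · constructor
    · show star _ * _ = 1
      rw [Matrix.star_eq_conjTranspose, Matrix.fromBlocks_conjTranspose,
        Matrix.fromBlocks_multiply]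
      simp [← Matrix.star_eq_conjTranspose, hsA, hc, hsc, transpose_mul_conj A h, ← Matrix.fromBlocks_one]
    · show _ * star _ = 1
      rw [Matrix.star_eq_conjTranspose, Matrix.fromBlocks_conjTranspose,
        Matrix.fromBlocks_multiply]
      simp [← Matrix.star_eq_conjTranspose, hAs, hc, hsc, conj_mul_transpose A h, ← Matrix.fromBlocks_one]
  · rw [J, Matrix.fromBlocks_transpose, Matrix.fromBlocks_multiply,
      Matrix.fromBlocks_multiply]
    have h2 : A.transpose.transpose * A.map (starRingEnd ℂ) = A * A.map (starRingEnd ℂ) := by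
      rw [Matrix.transpose_transpose]
    have h3 : (A.map (starRingEnd ℂ)).transpose = star A := by
      ext i j
      simp [Matrix.star_apply, Matrix.map_apply]
    simp [transpose_mul_conj A h, h3, hsA]
  · rw [rho, Matrix.star_eq_conjTranspose, Matrix.fromBlocks_conjTranspose,
      Matrix.fromBlocks_multiply, Matrix.fromBlocks_multiply]
    simp [Matrix.mul_smul, Matrix.smul_mul, ← Matrix.star_eq_conjTranspose, hAs, hc, hsc, conj_mul_transpose A h]


lemma rho_diag (a b : ℝ) :
    rho n a b = Matrix.diagonal (Sum.elim (fun _ : Fin n => (a : ℂ)) (fun _ => (b : ℂ))) := by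
  ext i j
  rcases i with i | i <;> rcases j with j | j <;>
    simp [rho, Matrix.fromBlocks, Matrix.diagonal, Matrix.one_apply, Sum.elim] <;> aesop

lemma toBlocks₁₁_one :
    (1 : Matrix (Fin n ⊕ Fin n) (Fin n ⊕ Fin n) ℂ).toBlocks₁₁ = 1 := by
  ext i j; simp [Matrix.toBlocks₁₁, Matrix.one_apply]

lemma stab_mem (a b : ℝ) (hab : a ≠ b) (S : Matrix (Fin n ⊕ Fin n) (Fin n ⊕ Fin n) ℂ)
    (hS : S ∈ stabSet n a b) :
    ∃ A ∈ Matrix.unitaryGroup (Fin n) ℂ,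
      S = Matrix.fromBlocks A 0 0 (A.map (starRingEnd ℂ)) := by
  obtain ⟨hU, hJ, hR⟩ := hS
  have hSs : S * star S = 1 := hU.2
  have hsS : star S * S = 1 := hU.1
  have hcomm : S * rho n a b = rho n a b * S := by
    have := congrArg (· * S) hR
    simpa [Matrix.mul_assoc, hsS] using this
  have hne : (a : ℂ) ≠ (b : ℂ) := by exact_mod_cast hab
  set d := Sum.elim (fun _ : Fin n => (a : ℂ)) (fun _ => (b : ℂ)) with hd
  rw [rho_diag] at hcomm
  have hij : ∀ i j, S i j * d j = d i * S i j := by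
    intro i j
    have := congrFun (congrFun hcomm i) j
    simpa [Matrix.mul_diagonal, Matrix.diagonal_mul] using this
  have h12 : ∀ p q : Fin n, S (Sum.inl p) (Sum.inr q) = 0 := by
    intro p q
    have h := hij (Sum.inl p) (Sum.inr q)
    simp [hd] at h
    have h0 : S (Sum.inl p) (Sum.inr q) * ((b : ℂ) - a) = 0 := by linear_combination h
    exact (mul_eq_zero.mp h0).resolve_right (sub_ne_zero.mpr hne.symm)
  have h21 : ∀ p q : Fin n, S (Sum.inr p) (Sum.inl q) = 0 := by
    intro p q
    have h := hij (Sum.inr p) (Sum.inl q)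
    simp [hd] at h
    have h0 : S (Sum.inr p) (Sum.inl q) * ((a : ℂ) - b) = 0 := by linear_combination h
    exact (mul_eq_zero.mp h0).resolve_right (sub_ne_zero.mpr hne)
  -- S is block diagonal
  set A := S.toBlocks₁₁ with hA
  set D := S.toBlocks₂₂ with hD
  have hSblock : S = Matrix.fromBlocks A 0 0 D := by
    ext i j
    rcases i with p | p <;> rcases j with q | q
    · simp [Matrix.fromBlocks, hA, Matrix.toBlocks₁₁]
    · simpa [Matrix.fromBlocks] using h12 p q
    · simpa [Matrix.fromBlocks] using h21 p q
    · simp [Matrix.fromBlocks, hD, Matrix.toBlocks₂₂]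
  rw [hSblock] at hsS hSs hJ
  rw [Matrix.star_eq_conjTranspose, Matrix.fromBlocks_conjTranspose, ← Matrix.fromBlocks_one,
    Matrix.fromBlocks_multiply] at hsS hSs
  have h1 : Aᴴ * A = 1 := by
    have := congrArg Matrix.toBlocks₁₁ hsS
    simpa [Matrix.toBlocks_fromBlocks₁₁, toBlocks₁₁_one] using this
  have h1' : A * Aᴴ = 1 := by
    have := congrArg Matrix.toBlocks₁₁ hSs
    simpa [Matrix.toBlocks_fromBlocks₁₁, toBlocks₁₁_one] using this
  have hAmem : A ∈ Matrix.unitaryGroup (Fin n) ℂ := ⟨h1, h1'⟩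
  have hAD : Aᵀ * D = 1 := by
    rw [J, Matrix.fromBlocks_transpose, Matrix.fromBlocks_multiply,
      Matrix.fromBlocks_multiply] at hJ
    have := congrArg Matrix.toBlocks₁₂ hJ
    simpa [Matrix.toBlocks_fromBlocks₁₂] using this
  have hDconj : D = A.map (starRingEnd ℂ) := by
    calc D = 1 * D := (one_mul D).symm
    _ = (A.map (starRingEnd ℂ) * Aᵀ) * D := by rw [conj_mul_transpose A hAmem]
    _ = A.map (starRingEnd ℂ) * (Aᵀ * D) := by rw [Matrix.mul_assoc]
    _ = A.map (starRingEnd ℂ) := by rw [hAD, mul_one]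
  exact ⟨A, hAmem, by rw [hSblock, hDconj]⟩
/-- For 0 < a, 0 < b, a ≠ b and n(a+b) = 1, the stabilizer of
ρ = diag(a I_n, b I_n) in the compact symplectic group is exactly the set of
block matrices [[A,0],[0,Ā]] with A ∈ U(n); this stabilizer is isomorphic as a
group to U(n). -/
theorem symplectic_stabilizer_of_two_block_state
    (n : ℕ) (a b : ℝ) (ha : 0 < a) (hb : 0 < b) (hab : a ≠ b)
    (hsum : (n : ℝ) * (a + b) = 1) :
    stabSet n a b =
      {S | ∃ A ∈ Matrix.unitaryGroup (Fin n) ℂ,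
        S = Matrix.fromBlocks A 0 0 (A.map (starRingEnd ℂ))} ∧
    ∃ e : Matrix.unitaryGroup (Fin n) ℂ ≃ stabSet n a b,
      ∀ A B : Matrix.unitaryGroup (Fin n) ℂ,
        (↑(e (A * B)) : Matrix (Fin n ⊕ Fin n) (Fin n ⊕ Fin n) ℂ) =
          (↑(e A) : Matrix (Fin n ⊕ Fin n) (Fin n ⊕ Fin n) ℂ) *
          (↑(e B) : Matrix (Fin n ⊕ Fin n) (Fin n ⊕ Fin n) ℂ) := by
  constructor
  · ext S
    constructor
    · exact stab_mem a b hab S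
    · rintro ⟨A, hA, rfl⟩
      exact mem_stab a b A hA
  · set f : Matrix.unitaryGroup (Fin n) ℂ → stabSet n a b :=
      fun A => ⟨Matrix.fromBlocks (A : Matrix (Fin n) (Fin n) ℂ) 0 0
          ((A : Matrix (Fin n) (Fin n) ℂ).map (starRingEnd ℂ)),
        mem_stab a b (A : Matrix (Fin n) (Fin n) ℂ) A.2⟩ with hf
    have hinj : Function.Injective f := by
      intro A B hAB
      have := congrArg (fun M : stabSet n a b => Matrix.toBlocks₁₁ M.1) hAB
      simp only [hf, Matrix.toBlocks_fromBlocks₁₁] at this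
      exact Subtype.ext this
    have hsurj : Function.Surjective f := by
      rintro ⟨S, hS⟩
      obtain ⟨A, hA, rfl⟩ := stab_mem a b hab S hS
      exact ⟨⟨A, hA⟩, rfl⟩
    refine ⟨Equiv.ofBijective f ⟨hinj, hsurj⟩, ?_⟩
    intro A B
    show (f (A * B)).1 = (f A).1 * (f B).1
    simp only [hf, Submonoid.coe_mul, Matrix.fromBlocks_multiply]
    congr 1 <;> simp [Matrix.map_mul]


end Stmt18
end
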